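/- arXiv:0911.1571 — 2 statements merged into one kernel-verified Lean document; each statement's English description precedes it below -/
import Mathlib

section
/- Let V be a finite-dimensional subspace of F₂ⁿ. Suppose q : F₂ⁿ → F₂ is a quadratic form q(x) = Σ_{i<j} q_{ij} x_i x_j. If there exist fourth roots of unity c₁,…,cₙ ∈ ℂ (powers of i) such that ∏_j c_j^{x_j} = (−1)^{q(x)} for all x ∈ V restricted to those x with xₙ = 0, and there exist fourth roots of unity C₁,…,Cₙ such that ∏_j C_j^{x_j} = (−1)^{q(x)} for all x ∈ V with xₙ = 1 and C_j = c_j for j < n, then there exist fourth roots of unity D₁,…,Dₙ with ∏_j D_j^{x_j} = (−1)^{q(x)} for all x ∈ V. -/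
open Finset

/-- Gluing of fourth-root-of-unity phase representations of a quadratic form
across the hyperplanes `x_n = 0` and `x_n = 1` of a subspace `V ≤ F₂ⁿ`. -/
theorem stmt2 (n : ℕ) (V : Submodule (ZMod 2) (Fin (n + 1) → ZMod 2))
    (q : Fin (n + 1) → Fin (n + 1) → ZMod 2)
    (Q : (Fin (n + 1) → ZMod 2) → ZMod 2)
    (hQ : ∀ x, Q x = ∑ i, ∑ j, if i < j then q i j * x i * x j else 0)
    (c : Fin (n + 1) → ℂ) (hc : ∀ j, (c j) ^ 4 = 1)
    (h0 : ∀ x ∈ V, x (Fin.last n) = 0 →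
      ∏ j, (c j) ^ (x j).val = (-1 : ℂ) ^ (Q x).val)
    (C : Fin (n + 1) → ℂ) (hC : ∀ j, (C j) ^ 4 = 1)
    (hCc : ∀ j : Fin (n + 1), j ≠ Fin.last n → C j = c j)
    (h1 : ∀ x ∈ V, x (Fin.last n) = 1 →
      ∏ j, (C j) ^ (x j).val = (-1 : ℂ) ^ (Q x).val) :
    ∃ D : Fin (n + 1) → ℂ, (∀ j, (D j) ^ 4 = 1) ∧
      ∀ x ∈ V, ∏ j, (D j) ^ (x j).val = (-1 : ℂ) ^ (Q x).val := by
  refine ⟨C, hC, fun x hx => ?_⟩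
  by_cases h : x (Fin.last n) = 1
  · exact h1 x hx h
  · have h0' : x (Fin.last n) = 0 := by
      have : ∀ a : ZMod 2, a = 0 ∨ a = 1 := by decide
      rcases this (x (Fin.last n)) with h' | h'
      · exact h'
      · exact absurd h' h
    have heq : ∏ j, (C j) ^ (x j).val = ∏ j, (c j) ^ (x j).val := by
      refine Finset.prod_congr rfl fun j _ => ?_
      by_cases hj : j = Fin.last n
      · subst hj; rw [h0']; simp
      · rw [hCc j hj]
    rw [heq]
    exact h0 x hx h0'
end

section
/- Let S ≤ P_n be the stabilizer of an n-qubit stabilizer state whose stabilizer matrix, after qubit permutation, has the standard form [I_k P | Q 0; 0 0 | Pᵀ I_{n−k}] over F₂. Let C ≤ F₂ⁿ be the binary code generated by [Pᵀ I_{n−k}] (the Z-only part). If every minimal-support element of S is a Z-only operator, then every minimal codeword of C corresponds to a minimal-support element of S. -/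
open Finset

/-- Support of a Pauli element given in binary symplectic form `(a | b)`. -/
def psupp {ι : Type*} (g : (ι → ZMod 2) × (ι → ZMod 2)) : Set ι :=
  {i | g.1 i ≠ 0 ∨ g.2 i ≠ 0}

/-- Minimal-support element of a stabilizer (a subspace of `F₂^{2n}`). -/
def MinElt {ι : Type*}
    (S : Submodule (ZMod 2) ((ι → ZMod 2) × (ι → ZMod 2)))
    (g : (ι → ZMod 2) × (ι → ZMod 2)) : Prop :=
  g ∈ S ∧ g ≠ 0 ∧ ∀ h ∈ S, h ≠ 0 → psupp h ⊆ psupp g → psupp h = psupp g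

def bsupp {ι : Type*} (c : ι → ZMod 2) : Set ι := {i | c i ≠ 0}

/-- Minimal codeword of a binary code. -/
def MinCodeword {ι : Type*} (C : Submodule (ZMod 2) (ι → ZMod 2))
    (c : ι → ZMod 2) : Prop :=
  c ∈ C ∧ c ≠ 0 ∧ ∀ x ∈ C, x ≠ 0 → bsupp x ⊆ bsupp c → bsupp x = bsupp c

/-!
A minimal-support element of `S` below `(0, c)` is `Z`-only by hypothesis. Because the `X`-parts of
the `X`-type generators contain the block `I_k`, they are independent, so a `Z`-only element of `S`
is a combination of the `Z`-type generators alone, i.e. its `Z`-part lies in `C`. Its support is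
then contained in that of `c`, and minimality of `c` forces equality.
-/

section Span

variable {R M N ι κ : Type*} [Semiring R] [AddCommMonoid M] [AddCommMonoid N]
  [Module R M] [Module R N]

theorem prodMk_zero_mem_span_range_sumElim_iff {u : ι → M × N} {w : κ → N}
    (hu : LinearIndependent R (fun i => (u i).1)) (z : N) :
    ((0 : M), z) ∈ Submodule.span R (Set.range (Sum.elim u fun j => ((0 : M), w j))) ↔
      z ∈ Submodule.span R (Set.range w) := by
  have hZspan : Submodule.span R (Set.range fun j => ((0 : M), w j)) =
      (Submodule.span R (Set.range w)).map (LinearMap.inr R M N) := by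
    rw [Submodule.map_span, ← Set.range_comp]
    rfl
  rw [Set.Sum.elim_range, Submodule.span_union, Submodule.mem_sup, hZspan]
  constructor
  · rintro ⟨a, ha, _, ⟨z', hz', rfl⟩, hsum⟩
    have ha0 : a = 0 := by
      refine Submodule.disjoint_def.mp (Submodule.range_ker_disjoint (f := LinearMap.fst R M N) hu)
        a ha ?_
      simpa using congrArg Prod.fst hsum
    subst ha0
    obtain rfl : z' = z := by simpa using congrArg Prod.snd hsum
    exact hz'
  · intro hz
    exact ⟨0, Submodule.zero_mem _, (0, z), ⟨z, hz, rfl⟩, zero_add _⟩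

end Span

section Support

variable {ι : Type*}

theorem psupp_zero_prodMk (c : ι → ZMod 2) : psupp ((0 : ι → ZMod 2), c) = bsupp c := by
  ext i
  simp [psupp, bsupp]

theorem exists_minElt_psupp_subset [Finite ι]
    {S : Submodule (ZMod 2) ((ι → ZMod 2) × (ι → ZMod 2))} {h : (ι → ZMod 2) × (ι → ZMod 2)}
    (hS : h ∈ S) (h0 : h ≠ 0) : ∃ g, MinElt S g ∧ psupp g ⊆ psupp h := by
  obtain ⟨g, ⟨hgS, hg0, hgh⟩, hgmin⟩ := Set.Finite.exists_minimalFor psupp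
    {g | g ∈ S ∧ g ≠ 0 ∧ psupp g ⊆ psupp h} (Set.toFinite _) ⟨h, hS, h0, subset_rfl⟩
  refine ⟨g, ⟨hgS, hg0, fun h' hh'S hh'0 hh'g => ?_⟩, hgh⟩
  exact hh'g.antisymm (hgmin ⟨hh'S, hh'0, hh'g.trans hgh⟩ hh'g)

theorem minElt_zero_prodMk_of_minCodeword [Finite ι]
    {S : Submodule (ZMod 2) ((ι → ZMod 2) × (ι → ZMod 2))} {C : Submodule (ZMod 2) (ι → ZMod 2)}
    (hSC : ∀ z, ((0 : ι → ZMod 2), z) ∈ S ↔ z ∈ C) (hZonly : ∀ g, MinElt S g → g.1 = 0)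
    {c : ι → ZMod 2} (hc : MinCodeword C c) : MinElt S (0, c) := by
  obtain ⟨hcC, hc0, hcmin⟩ := hc
  refine ⟨(hSC c).mpr hcC, fun h => hc0 (congrArg Prod.snd h), fun h hS h0 hhc => ?_⟩
  obtain ⟨g, hg, hgh⟩ := exists_minElt_psupp_subset hS h0
  obtain ⟨g₂, rfl⟩ : ∃ g₂, g = (0, g₂) := ⟨g.2, Prod.ext (hZonly g hg) rfl⟩
  obtain ⟨hgS, hg0, -⟩ := hg
  rw [psupp_zero_prodMk] at hhc hgh ⊢
  have hg₂c : bsupp g₂ = bsupp c :=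
    hcmin g₂ ((hSC g₂).mp hgS) (fun h => hg0 (by rw [h]; rfl)) (hgh.trans hhc)
  exact hhc.antisymm (hg₂c ▸ hgh)

end Support

theorem linearIndependent_sumElim_ite_eq {R : Type*} [Semiring R] {k m : ℕ}
    (P : Matrix (Fin k) (Fin m) R) :
    LinearIndependent R fun i : Fin k =>
      Sum.elim (fun a : Fin k => if a = i then (1 : R) else 0) (fun b : Fin m => P i b) := by
  refine LinearIndependent.of_comp (LinearMap.funLeft R R Sum.inl) ?_
  convert (Pi.basisFun R (Fin k)).linearIndependent using 1
  ext i a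
  simp [LinearMap.funLeft, Pi.single_apply]

/-- For a stabilizer in standard form `[I_k P | Q 0 ; 0 0 | Pᵀ I_{n-k}]`, if
every minimal-support element of `S` is a `Z`-only operator, then every
minimal codeword of the code `C` generated by `[Pᵀ I_{n-k}]` gives a
minimal-support element of `S`. -/
theorem stmt9 (k m : ℕ) (P : Matrix (Fin k) (Fin m) (ZMod 2))
    (Q : Matrix (Fin k) (Fin k) (ZMod 2))
    (S : Submodule (ZMod 2)
      ((Fin k ⊕ Fin m → ZMod 2) × (Fin k ⊕ Fin m → ZMod 2)))
    (hS : S = Submodule.span (ZMod 2) (Set.range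
      (Sum.elim
        (fun i : Fin k =>
          ((Sum.elim (fun a : Fin k => if a = i then (1 : ZMod 2) else 0)
              (fun b : Fin m => P i b),
            Sum.elim (fun a : Fin k => Q i a) (fun _ : Fin m => (0 : ZMod 2)))))
        (fun i : Fin m =>
          ((0 : Fin k ⊕ Fin m → ZMod 2),
            Sum.elim (fun a : Fin k => P a i)
              (fun b : Fin m => if b = i then (1 : ZMod 2) else 0))))))
    (C : Submodule (ZMod 2) (Fin k ⊕ Fin m → ZMod 2))
    (hC : C = Submodule.span (ZMod 2)
      (Set.range fun i : Fin m => fun j : Fin k ⊕ Fin m =>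
        Sum.elim (fun a : Fin k => P a i)
          (fun b : Fin m => if b = i then (1 : ZMod 2) else 0) j))
    (hZonly : ∀ g, MinElt S g → g.1 = 0) :
    ∀ c, MinCodeword C c → MinElt S (0, c) := by
  subst hS hC
  intro c hc
  exact minElt_zero_prodMk_of_minCodeword
    (prodMk_zero_mem_span_range_sumElim_iff (linearIndependent_sumElim_ite_eq P)) hZonly hc
end
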